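/- Let f : S₊ⁿ → ℝ be convex and M-smooth over PSD matrices, let X* ⪰ 0 minimize f over the PSD cone, and let 0 be a feasible point. Then ‖P₊(−∇f(0))‖_F ≤ M·‖X*‖_F, where P₊ denotes projection onto the PSD cone. -/

import Mathlib

open Matrix

noncomputable def vnorm {m : Type*} [Fintype m] (v : m → ℝ) : ℝ :=
  Real.sqrt (∑ i, v i ^ 2)

noncomputable def frob {m n : Type*} [Fintype m] [Fintype n] (A : Matrix m n ℝ) : ℝ :=
  Real.sqrt (∑ i, ∑ j, A i j ^ 2)

/-- The spectral norm (largest singular value) of a real matrix. -/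
noncomputable def specNorm {m n : Type*} [Fintype m] [Fintype n] (A : Matrix m n ℝ) : ℝ :=
  sSup {c | ∃ x : n → ℝ, vnorm x = 1 ∧ c = vnorm (A.mulVec x)}

/-- The smallest singular value of a real matrix. -/
noncomputable def sigMin {m n : Type*} [Fintype m] [Fintype n] (A : Matrix m n ℝ) : ℝ :=
  sInf {c | ∃ x : n → ℝ, vnorm x = 1 ∧ c = vnorm (A.mulVec x)}

/-- `Dist U V`: the infimum of `‖U - V R‖_F` over orthogonal `R`. -/
noncomputable def FDist {n r : Type*} [Fintype n] [Fintype r] [DecidableEq r]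
    (U V : Matrix n r ℝ) : ℝ :=
  sInf {c | ∃ R : Matrix r r ℝ, Rᵀ * R = 1 ∧ c = frob (U - V * R)}

/-- The `i`-th largest singular value of a real matrix. -/
noncomputable def singVal {n m : ℕ} (A : Matrix (Fin n) (Fin m) ℝ) (i : Fin m) : ℝ :=
  Real.sqrt ((Matrix.conjTranspose_eq_transpose_of_trivial A ▸ Matrix.isHermitian_conjTranspose_mul_self A).eigenvalues
    ((Tuple.sort (Matrix.conjTranspose_eq_transpose_of_trivial A ▸ Matrix.isHermitian_conjTranspose_mul_self A).eigenvalues) i.rev))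

/-!
Let `Y = P₊(-∇f(0))`. Testing the projection against the shrunken points `tY ∈ S₊ⁿ` gives the
variational inequality `‖Y‖² ≤ ⟨-∇f(0), Y⟩`, and testing the optimality of `X*` in the feasible
direction `Y` gives `⟨∇f(X*), Y⟩ ≥ 0`. Adding the two and applying Cauchy–Schwarz,
`‖Y‖² ≤ ⟨∇f(X*) - ∇f(0), Y⟩ ≤ ‖∇f(X*) - ∇f(0)‖ ‖Y‖ ≤ M ‖X*‖ ‖Y‖`.
-/

open RealInnerProductSpace Filter Topology

section Projection

variable {E : Type*} [NormedAddCommGroup E] [InnerProductSpace ℝ E]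

theorem sq_norm_le_real_inner_of_forall_norm_sub_le {v y : E}
    (hproj : ∀ t : ℝ, 0 ≤ t → t ≤ 1 → ‖v - y‖ ≤ ‖v - t • y‖) : ‖y‖ ^ 2 ≤ ⟪v, y⟫ := by
  set c := ⟪v - y, y⟫ with hc_def
  have hsmall : ∀ s ∈ Set.Ioc (0 : ℝ) 1, 0 ≤ 2 * c + s * ‖y‖ ^ 2 := by
    rintro s ⟨hs0, hs1⟩
    have hle := hproj (1 - s) (by linarith) (by linarith)
    have hexpand : ‖v - (1 - s) • y‖ ^ 2 = ‖v - y‖ ^ 2 + s * (2 * c + s * ‖y‖ ^ 2) := by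
      rw [show v - (1 - s) • y = (v - y) + s • y by rw [sub_smul, one_smul]; abel,
        norm_add_sq_real, real_inner_smul_right, norm_smul, Real.norm_of_nonneg hs0.le]
      ring
    have hsq := pow_le_pow_left₀ (norm_nonneg _) hle 2
    nlinarith
  have hlim : Tendsto (fun s : ℝ => 2 * c + s * ‖y‖ ^ 2) (𝓝[>] 0) (𝓝 (2 * c)) := by
    have hcont : Continuous fun s : ℝ => 2 * c + s * ‖y‖ ^ 2 := by fun_prop
    simpa using (hcont.tendsto 0).mono_left nhdsWithin_le_nhds
  have h2c : 0 ≤ 2 * c := ge_of_tendsto hlim (eventually_of_mem (Ioc_mem_nhdsGT one_pos) hsmall)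
  have hc : c = ⟪v, y⟫ - ‖y‖ ^ 2 := by
    rw [hc_def, inner_sub_left, real_inner_self_eq_norm_sq]
  linarith

theorem norm_le_norm_sub_of_forall_norm_neg_sub_le {u y w : E}
    (hproj : ∀ t : ℝ, 0 ≤ t → t ≤ 1 → ‖-u - y‖ ≤ ‖-u - t • y‖) (hw : 0 ≤ ⟪w, y⟫) :
    ‖y‖ ≤ ‖w - u‖ := by
  have hsq : ‖y‖ ^ 2 ≤ ‖w - u‖ * ‖y‖ := calc
    ‖y‖ ^ 2 ≤ ⟪-u, y⟫ := sq_norm_le_real_inner_of_forall_norm_sub_le hproj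
    _ ≤ ⟪w - u, y⟫ := by rw [inner_sub_left, inner_neg_left]; linarith
    _ ≤ ‖w - u‖ * ‖y‖ := real_inner_le_norm _ _
  nlinarith [norm_nonneg y, norm_nonneg (w - u)]

end Projection

theorem HasDerivAt.nonneg_of_forall_pos_le {φ : ℝ → ℝ} {d : ℝ} (hφ : HasDerivAt φ d 0)
    (hmin : ∀ t : ℝ, 0 < t → φ 0 ≤ φ t) : 0 ≤ d := by
  have hslope : Tendsto (slope φ 0) (𝓝[>] 0) (𝓝 d) :=
    (hasDerivAt_iff_tendsto_slope.mp hφ).mono_left (nhdsWithin_mono _ fun _ ht => ne_of_gt ht)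
  refine ge_of_tendsto hslope (eventually_nhdsWithin_of_forall fun t (ht : 0 < t) => ?_)
  rw [slope_def_field, sub_zero]
  exact div_nonneg (sub_nonneg.mpr (hmin t ht)) ht.le

section Frobenius

variable {m n : Type*}

def flattenL2 (A : Matrix m n ℝ) : EuclideanSpace ℝ (m × n) :=
  WithLp.toLp 2 fun p => A p.1 p.2

theorem flattenL2_neg (A : Matrix m n ℝ) : flattenL2 (-A) = -flattenL2 A := rfl

theorem flattenL2_sub (A B : Matrix m n ℝ) : flattenL2 (A - B) = flattenL2 A - flattenL2 B := rfl

theorem flattenL2_smul (c : ℝ) (A : Matrix m n ℝ) : flattenL2 (c • A) = c • flattenL2 A := rfl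

variable [Fintype m] [Fintype n]

theorem frob_eq_norm_flattenL2 (A : Matrix m n ℝ) : frob A = ‖flattenL2 A‖ := by
  simp [frob, flattenL2, EuclideanSpace.norm_eq, Fintype.sum_prod_type]

theorem inner_flattenL2 (A B : Matrix m n ℝ) : ⟪flattenL2 A, flattenL2 B⟫ = (Aᵀ * B).trace := by
  simp [flattenL2, PiLp.inner_apply, Matrix.trace, Matrix.mul_apply, Fintype.sum_prod_type,
    Finset.sum_comm (γ := m), mul_comm]

end Frobenius

theorem stmt5_general {n : ℕ} (M : ℝ)
    (f : Matrix (Fin n) (Fin n) ℝ → ℝ)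
    (g : Matrix (Fin n) (Fin n) ℝ → Matrix (Fin n) (Fin n) ℝ)
    (hgrad : ∀ X H : Matrix (Fin n) (Fin n) ℝ,
      HasDerivAt (fun t : ℝ => f (X + t • H)) (((g X)ᵀ * H).trace) 0)
    (hsmooth : ∀ X Y : Matrix (Fin n) (Fin n) ℝ, X.PosSemidef → Y.PosSemidef →
      frob (g X - g Y) ≤ M * frob (X - Y))
    (Xstar : Matrix (Fin n) (Fin n) ℝ) (hXstar : Xstar.PosSemidef)
    (hopt : ∀ Z : Matrix (Fin n) (Fin n) ℝ, Z.PosSemidef → f Xstar ≤ f Z)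
    (Y : Matrix (Fin n) (Fin n) ℝ) (hY : Y.PosSemidef)
    (hproj : ∀ Z : Matrix (Fin n) (Fin n) ℝ, Z.PosSemidef →
      frob (-(g 0) - Y) ≤ frob (-(g 0) - Z)) :
    frob Y ≤ M * frob Xstar := by
  have hfirstOrder : 0 ≤ ⟪flattenL2 (g Xstar), flattenL2 Y⟫ := by
    rw [inner_flattenL2]
    refine (hgrad Xstar Y).nonneg_of_forall_pos_le fun t ht => ?_
    simpa using hopt _ (hXstar.add (hY.smul ht.le))
  have hshrink (t : ℝ) (ht0 : 0 ≤ t) (_ : t ≤ 1) :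
      ‖-flattenL2 (g 0) - flattenL2 Y‖ ≤ ‖-flattenL2 (g 0) - t • flattenL2 Y‖ := by
    simpa only [frob_eq_norm_flattenL2, flattenL2_sub, flattenL2_neg, flattenL2_smul] using
      hproj _ (hY.smul ht0)
  calc frob Y ≤ frob (g Xstar - g 0) := by
        simpa only [frob_eq_norm_flattenL2, flattenL2_sub] using
          norm_le_norm_sub_of_forall_norm_neg_sub_le hshrink hfirstOrder
    _ ≤ M * frob Xstar := by simpa using hsmooth Xstar 0 hXstar .zero

/-- For convex `M`-smooth `f` over the PSD cone with PSD minimizer `X*`,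
the PSD-cone projection `Y = P₊(-∇f(0))` satisfies `‖Y‖_F ≤ M ‖X*‖_F`. -/
theorem stmt5 {n : ℕ} (M : ℝ)
    (f : Matrix (Fin n) (Fin n) ℝ → ℝ)
    (g : Matrix (Fin n) (Fin n) ℝ → Matrix (Fin n) (Fin n) ℝ)
    (hconv : ConvexOn ℝ {X : Matrix (Fin n) (Fin n) ℝ | X.PosSemidef} f)
    (hgrad : ∀ X H : Matrix (Fin n) (Fin n) ℝ,
      HasDerivAt (fun t : ℝ => f (X + t • H)) (((g X)ᵀ * H).trace) 0)
    (hsmooth : ∀ X Y : Matrix (Fin n) (Fin n) ℝ, X.PosSemidef → Y.PosSemidef →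
      frob (g X - g Y) ≤ M * frob (X - Y))
    (Xstar : Matrix (Fin n) (Fin n) ℝ) (hXstar : Xstar.PosSemidef)
    (hopt : ∀ Z : Matrix (Fin n) (Fin n) ℝ, Z.PosSemidef → f Xstar ≤ f Z)
    (Y : Matrix (Fin n) (Fin n) ℝ) (hY : Y.PosSemidef)
    (hproj : ∀ Z : Matrix (Fin n) (Fin n) ℝ, Z.PosSemidef →
      frob (-(g 0) - Y) ≤ frob (-(g 0) - Z)) :
    frob Y ≤ M * frob Xstar :=
  stmt5_general M f g hgrad hsmooth Xstar hXstar hopt Y hY hproj
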